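/- Let μ ∈ (0,2) and f_λ(x) = (λ + ⟨x⟩^{-μ})^{1/2} for λ > 0. Let F_+ denote multiplication by the indicator of {x : λ ≥ ⟨x⟩^{-μ}}. Then for all u ∈ B(⟨x⟩), ‖f_λ^{-1/2} F_+ u‖_{B(f_λ⟨x⟩)} ≤ 8(√2 + 1) ‖u‖_{B(⟨x⟩)}, uniformly in λ > 0. -/

import Mathlib

open MeasureTheory Filter Topology
open scoped ENNReal

noncomputable section

/-- The dyadic radii: `R_0 = 0`, `R_j = 2^(j-1)` for `j ≥ 1`
(here indexed so that `dyadicR (k+1) = 2^k`). -/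
def dyadicR : ℕ → ℝ
  | 0 => 0
  | k + 1 => 2 ^ k

/-- For the self-adjoint multiplication operator by the real function `a` on `L²(μ)`,
the norm of the spectral block `F(R_k ≤ |A| < R_{k+1}) u`, i.e. of the restriction of
`u` to `{R_k ≤ |a| < R_{k+1}}`, valued in `ℝ≥0∞`. -/
def blockE {α : Type*} [MeasurableSpace α] (μ : Measure α) (a : α → ℝ) (u : α → ℂ)
    (k : ℕ) : ℝ≥0∞ :=
  eLpNorm (Set.indicator {x | dyadicR k ≤ |a x| ∧ |a x| < dyadicR (k + 1)} u) 2 μ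

/-- The Besov norm `‖u‖_{B(a)} = Σ_j R_j^{1/2} ‖F_j u‖` of the multiplication
operator by `a` on `L²(μ)`, valued in `ℝ≥0∞`; `u ∈ B(a)` iff this is finite. -/
def besovE {α : Type*} [MeasurableSpace α] (μ : Measure α) (a : α → ℝ) (u : α → ℂ) :
    ℝ≥0∞ :=
  ∑' k : ℕ, ENNReal.ofReal (Real.sqrt (dyadicR (k + 1))) * blockE μ a u k

/-- The dual Besov norm `‖u‖_{B(a)*} = sup_j R_j^{-1/2} ‖F_j u‖`, valued in `ℝ≥0∞`. -/
def dualE {α : Type*} [MeasurableSpace α] (μ : Measure α) (a : α → ℝ) (u : α → ℂ) :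
    ℝ≥0∞ :=
  ⨆ k : ℕ, (ENNReal.ofReal (Real.sqrt (dyadicR (k + 1))))⁻¹ * blockE μ a u k

/-- The Japanese bracket `⟨x⟩ = (|x|² + 1)^{1/2}` on `ℝ^d`. -/
def jap {d : ℕ} (x : EuclideanSpace ℝ (Fin d)) : ℝ := Real.sqrt (‖x‖ ^ 2 + 1)

/-!
On `F₊` one has `λ ≤ f_λ² ≤ 2λ`, so `f_λ⟨x⟩` agrees with `√λ ⟨x⟩` up to a factor `√2`. Hence,
inside `F₊`, each dyadic block of `⟨x⟩` meets at most three dyadic blocks of `f_λ⟨x⟩`, and on the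
intersection of the `k`-th block of `f_λ⟨x⟩` with the `j`-th block of `⟨x⟩` the weight
`R_{k+1}^{1/2} f_λ^{-1/2}` is at most `√2 R_{j+1}^{1/2}` (for `k = 0` because
`f_λ⟨x⟩ ≥ ⟨x⟩^{1-μ/2} ≥ 1` when `μ ≤ 2`). Splitting each block of `f_λ⟨x⟩` along the blocks of
`⟨x⟩` and exchanging the two sums gives the bound with constant `3√2 ≤ 8(√2 + 1)`.
-/
namespace ENNReal

theorem tsum_sq_le_sq_tsum {ι : Type*} (y : ι → ℝ≥0∞) : ∑' i, y i ^ 2 ≤ (∑' i, y i) ^ 2 :=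
  calc ∑' i, y i ^ 2 = ∑' i, y i * y i := by simp only [sq]
    _ ≤ ∑' i, y i * ∑' j, y j :=
      ENNReal.tsum_le_tsum fun i => mul_le_mul_right (ENNReal.le_tsum i) _
    _ = (∑' i, y i) ^ 2 := by rw [ENNReal.tsum_mul_right, sq]

end ENNReal

section L2

variable {α E : Type*} [MeasurableSpace α] [NormedAddCommGroup E] {μ : Measure α}

theorem eLpNorm_two_sq_eq_lintegral (f : α → E) :
    eLpNorm f 2 μ ^ 2 = ∫⁻ x, ‖f x‖ₑ ^ 2 ∂μ := by
  simpa using eLpNorm_nnreal_pow_eq_lintegral (μ := μ) (f := f) (p := 2) two_ne_zero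

theorem eLpNorm_two_indicator_iUnion_le {ι : Type*} [Countable ι] {t : ι → Set α}
    (ht : ∀ i, MeasurableSet (t i)) (f : α → E) :
    eLpNorm ((⋃ i, t i).indicator f) 2 μ ≤ ∑' i, eLpNorm ((t i).indicator f) 2 μ := by
  have hsq : ∀ s, MeasurableSet s →
      eLpNorm (s.indicator f) 2 μ ^ 2 = ∫⁻ x in s, ‖f x‖ₑ ^ 2 ∂μ := fun s hs => by
    rw [eLpNorm_indicator_eq_eLpNorm_restrict hs, eLpNorm_two_sq_eq_lintegral]
  rw [← ENNReal.pow_le_pow_left_iff two_ne_zero, hsq _ (MeasurableSet.iUnion ht)]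
  calc ∫⁻ x in ⋃ i, t i, ‖f x‖ₑ ^ 2 ∂μ ≤ ∑' i, ∫⁻ x in t i, ‖f x‖ₑ ^ 2 ∂μ :=
        lintegral_iUnion_le _ _
    _ = ∑' i, eLpNorm ((t i).indicator f) 2 μ ^ 2 := by simp only [hsq _ (ht _)]
    _ ≤ _ := ENNReal.tsum_sq_le_sq_tsum _

end L2

theorem exists_forall_mem_Ico_of_lt_add {P : ℕ → Prop} {N : ℕ}
    (h : ∀ k l, P k → P l → k < l + N) : ∃ m, ∀ k, P k → k ∈ Finset.Ico m (m + N) := by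
  classical
  by_cases hP : ∃ k, P k
  · exact ⟨Nat.find hP, fun k hk =>
      Finset.mem_Ico.2 ⟨Nat.find_min' hP hk, h k _ hk (Nat.find_spec hP)⟩⟩
  · exact ⟨0, fun k hk => (hP ⟨k, hk⟩).elim⟩

theorem dyadicR_succ (k : ℕ) : dyadicR (k + 1) = 2 ^ k := rfl

theorem dyadicR_pos (k : ℕ) : 0 < dyadicR (k + 1) := pow_pos two_pos k

theorem dyadicR_add_two (k : ℕ) : dyadicR (k + 2) = 2 * dyadicR (k + 1) := pow_succ' 2 k

theorem dyadicR_monotone : Monotone dyadicR := by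
  refine monotone_nat_of_le_succ fun k => ?_
  rcases k with _ | k
  · exact (dyadicR_pos 0).le
  · rw [dyadicR_add_two]; linarith [dyadicR_pos k]

theorem exists_dyadicR_le_lt {r : ℝ} (hr : 0 ≤ r) : ∃ k, dyadicR k ≤ r ∧ r < dyadicR (k + 1) := by
  classical
  have hex : ∃ n, r < dyadicR (n + 1) := pow_unbounded_of_one_lt r one_lt_two
  refine ⟨Nat.find hex, ?_, Nat.find_spec hex⟩
  rcases h : Nat.find hex with _ | n
  · exact hr
  · exact not_lt.1 (Nat.find_min hex (h ▸ n.lt_succ_self))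

theorem dyadicR_succ_le_two_mul_max {k : ℕ} {r : ℝ} (h : dyadicR k ≤ r) :
    dyadicR (k + 1) ≤ 2 * max r 1 := by
  rcases k with _ | k
  · rw [zero_add, dyadicR_succ, pow_zero]; linarith [le_max_right r 1]
  · rw [dyadicR_add_two]; linarith [le_max_left r 1]

theorem lt_add_three_of_dyadicR_le_of_lt_four_mul {k l : ℕ} {r s : ℝ} (hr : dyadicR k ≤ r)
    (hs : s < dyadicR (l + 1)) (hrs : r < 4 * s) : k < l + 3 := by
  by_contra! hk
  have h4 : dyadicR (l + 3) = 4 * dyadicR (l + 1) := by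
    rw [dyadicR_add_two (l + 1), dyadicR_add_two]; ring
  linarith [dyadicR_monotone hk]

def dyadicBlock {α : Type*} (a : α → ℝ) (k : ℕ) : Set α :=
  {x | dyadicR k ≤ |a x| ∧ |a x| < dyadicR (k + 1)}

theorem iUnion_dyadicBlock {α : Type*} (a : α → ℝ) : ⋃ k, dyadicBlock a k = Set.univ :=
  Set.eq_univ_of_forall fun x => Set.mem_iUnion.2 (exists_dyadicR_le_lt (abs_nonneg (a x)))

section DyadicBlock

variable {α : Type*} [MeasurableSpace α] {μ : Measure α} {a b : α → ℝ} {u v : α → ℂ}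

theorem blockE_eq_eLpNorm_indicator (k : ℕ) :
    blockE μ a u k = eLpNorm ((dyadicBlock a k).indicator u) 2 μ := rfl

theorem measurableSet_dyadicBlock (ha : Measurable a) (k : ℕ) : MeasurableSet (dyadicBlock a k) :=
  (measurableSet_le measurable_const ha.abs).inter (measurableSet_lt ha.abs measurable_const)

theorem sqrt_dyadicR_mul_eLpNorm_inter_le {C : ℝ} {k j : ℕ}
    (hvu : ∀ x ∈ dyadicBlock a k ∩ dyadicBlock b j,
      √(dyadicR (k + 1)) * ‖v x‖ ≤ C * √(dyadicR (j + 1)) * ‖u x‖) :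
    ENNReal.ofReal √(dyadicR (k + 1)) *
        eLpNorm ((dyadicBlock a k ∩ dyadicBlock b j).indicator v) 2 μ
      ≤ ENNReal.ofReal (C * √(dyadicR (j + 1))) * blockE μ b u j := by
  rw [← Real.enorm_eq_ofReal (Real.sqrt_nonneg _), ← eLpNorm_const_smul (√(dyadicR (k + 1)) : ℝ)]
  refine (eLpNorm_le_mul_eLpNorm_of_ae_le_mul
    (g := (dyadicBlock a k ∩ dyadicBlock b j).indicator u) (ae_of_all _ fun x => ?_) 2).trans
    (mul_le_mul_right ?_ _)
  · by_cases hx : x ∈ dyadicBlock a k ∩ dyadicBlock b j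
    · rw [Pi.smul_apply, Set.indicator_of_mem hx, Set.indicator_of_mem hx, norm_smul,
        Real.norm_of_nonneg (Real.sqrt_nonneg _)]
      exact hvu x hx
    · simp [Set.indicator_of_notMem hx]
  · rw [blockE_eq_eLpNorm_indicator, ← Set.indicator_indicator]
    exact eLpNorm_indicator_le _

/-- A Schur test for dyadic Besov norms; `hoverlap` says that on the support of `v` each block
of `b` meets at most `N` blocks of `a`. -/
theorem besovE_le_of_dyadicBlock_overlap (ha : Measurable a) (hb : Measurable b) (C : ℝ) (N : ℕ)
    (hvu : ∀ k j, ∀ x ∈ dyadicBlock a k ∩ dyadicBlock b j,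
      √(dyadicR (k + 1)) * ‖v x‖ ≤ C * √(dyadicR (j + 1)) * ‖u x‖)
    (hoverlap : ∀ j k l, ∀ x ∈ dyadicBlock a k ∩ dyadicBlock b j,
      ∀ y ∈ dyadicBlock a l ∩ dyadicBlock b j, v x ≠ 0 → v y ≠ 0 → k < l + N) :
    besovE μ a v ≤ ENNReal.ofReal (N * C) * besovE μ b u := by
  set T : ℕ → ℕ → ℝ≥0∞ := fun k j => ENNReal.ofReal √(dyadicR (k + 1)) *
    eLpNorm ((dyadicBlock a k ∩ dyadicBlock b j).indicator v) 2 μ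
  have hrow : ∀ k, ENNReal.ofReal √(dyadicR (k + 1)) * blockE μ a v k ≤ ∑' j, T k j := by
    intro k
    rw [blockE_eq_eLpNorm_indicator, ENNReal.tsum_mul_left]
    gcongr
    conv_lhs => rw [← Set.inter_univ (dyadicBlock a k), ← iUnion_dyadicBlock b, Set.inter_iUnion]
    exact eLpNorm_two_indicator_iUnion_le
      (fun j => (measurableSet_dyadicBlock ha k).inter (measurableSet_dyadicBlock hb j)) v
  have hcol : ∀ j, ∑' k, T k j ≤ N * ENNReal.ofReal (C * √(dyadicR (j + 1))) * blockE μ b u j := by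
    intro j
    obtain ⟨m, hm⟩ := exists_forall_mem_Ico_of_lt_add
      (P := fun k => ∃ x ∈ dyadicBlock a k ∩ dyadicBlock b j, v x ≠ 0)
      fun k l ⟨x, hx, hvx⟩ ⟨y, hy, hvy⟩ => hoverlap j k l x hx y hy hvx hvy
    have hzero : ∀ k ∉ Finset.Ico m (m + N), T k j = 0 := by
      intro k hk
      have : (dyadicBlock a k ∩ dyadicBlock b j).indicator v = 0 :=
        funext fun x => Set.indicator_apply_eq_zero.2 fun hx =>
          by_contra fun hvx => hk (hm k ⟨x, hx, hvx⟩)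
      simp [T, this]
    calc ∑' k, T k j = ∑ k ∈ Finset.Ico m (m + N), T k j := tsum_eq_sum hzero
      _ ≤ ∑ _k ∈ Finset.Ico m (m + N), ENNReal.ofReal (C * √(dyadicR (j + 1))) * blockE μ b u j :=
        Finset.sum_le_sum fun k _ => sqrt_dyadicR_mul_eLpNorm_inter_le (hvu k j)
      _ = _ := by rw [Finset.sum_const, Nat.card_Ico, nsmul_eq_mul, add_tsub_cancel_left, mul_assoc]
  calc besovE μ a v = ∑' k, ENNReal.ofReal √(dyadicR (k + 1)) * blockE μ a v k := rfl
    _ ≤ ∑' k, ∑' j, T k j := ENNReal.tsum_le_tsum hrow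
    _ = ∑' j, ∑' k, T k j := ENNReal.tsum_comm
    _ ≤ ∑' j, N * ENNReal.ofReal (C * √(dyadicR (j + 1))) * blockE μ b u j :=
      ENNReal.tsum_le_tsum hcol
    _ = ENNReal.ofReal (N * C) * besovE μ b u := by
      rw [besovE, ← ENNReal.tsum_mul_left]
      refine tsum_congr fun j => ?_
      rw [ENNReal.ofReal_mul' (Real.sqrt_nonneg _), ENNReal.ofReal_mul (Nat.cast_nonneg _),
        ENNReal.ofReal_natCast]
      ring

end DyadicBlock

theorem one_le_sqrt_add_rpow_neg_mul {lam μ J : ℝ} (hlam : 0 ≤ lam) (hμ : μ ≤ 2) (hJ : 1 ≤ J) :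
    1 ≤ √(lam + J ^ (-μ)) * J := by
  have hJμ : 1 ≤ J ^ (-μ) * J ^ 2 := by
    rw [← Real.rpow_natCast, ← Real.rpow_add (by linarith)]
    exact Real.one_le_rpow hJ (by push_cast; linarith)
  calc (1 : ℝ) = √1 := Real.sqrt_one.symm
    _ ≤ √((lam + J ^ (-μ)) * J ^ 2) := Real.sqrt_le_sqrt (by nlinarith [sq_nonneg J])
    _ = √(lam + J ^ (-μ)) * J := by rw [Real.sqrt_mul' _ (sq_nonneg J), Real.sqrt_sq (by linarith)]

theorem sqrt_mul_rpow_neg_quarter_le {R R' t J : ℝ} (ht : 0 < t) (hR : R ≤ 2 * (√t * J))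
    (hJ : J ≤ R') : √R * t ^ (-(1 / 4 : ℝ)) ≤ √2 * √R' := by
  have hquarter : t ^ (-(1 / 4 : ℝ)) = √(√t)⁻¹ := by
    rw [Real.sqrt_inv, Real.sqrt_eq_rpow, Real.sqrt_eq_rpow, ← Real.rpow_mul ht.le,
      Real.rpow_neg ht.le]
    norm_num
  rw [hquarter, ← Real.sqrt_mul' _ (inv_nonneg.2 (Real.sqrt_nonneg t)),
    ← Real.sqrt_mul zero_le_two]
  refine Real.sqrt_le_sqrt ?_
  rw [← div_eq_mul_inv, div_le_iff₀ (Real.sqrt_pos.2 ht)]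
  nlinarith [Real.sqrt_nonneg t]

theorem sqrt_add_mul_lt_four_mul {lam p q J J' : ℝ} (hlam : 0 < lam) (hp : p ≤ lam) (hq : 0 ≤ q)
    (hJ : 0 ≤ J) (hJJ' : J < 2 * J') : √(lam + p) * J < 4 * (√(lam + q) * J') := by
  have hpq : √(lam + p) ≤ √2 * √(lam + q) := by
    rw [← Real.sqrt_mul zero_le_two]
    exact Real.sqrt_le_sqrt (by linarith)
  have hq' : 0 < √(lam + q) := Real.sqrt_pos.2 (by linarith)
  have hsqrt2 : √2 ≤ 2 := by rw [Real.sqrt_le_left zero_le_two]; norm_num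
  calc √(lam + p) * J ≤ √2 * √(lam + q) * J := by gcongr
    _ ≤ 2 * √(lam + q) * J := by gcongr
    _ < 2 * √(lam + q) * (2 * J') := by gcongr
    _ = 4 * (√(lam + q) * J') := by ring

section JapaneseBracket

variable {d : ℕ}

theorem one_le_jap (x : EuclideanSpace ℝ (Fin d)) : 1 ≤ jap x :=
  Real.one_le_sqrt.2 (by nlinarith [sq_nonneg ‖x‖])

theorem jap_pos (x : EuclideanSpace ℝ (Fin d)) : 0 < jap x :=
  one_pos.trans_le (one_le_jap x)

theorem measurable_jap : Measurable (jap (d := d)) := by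
  unfold jap
  fun_prop

/-- `f_λ⟨x⟩`, where `f_λ = (λ + ⟨x⟩^{-μ})^{1/2}`. -/
def scaledJap (μ lam : ℝ) (x : EuclideanSpace ℝ (Fin d)) : ℝ := √(lam + jap x ^ (-μ)) * jap x

/-- `f_λ^{-1/2} F₊ u`. -/
def weightedFarPart (μ lam : ℝ) (u : EuclideanSpace ℝ (Fin d) → ℂ) :
    EuclideanSpace ℝ (Fin d) → ℂ :=
  Set.indicator {x | jap x ^ (-μ) ≤ lam}
    (fun x => (((lam + jap x ^ (-μ)) ^ (-(1 / 4 : ℝ)) : ℝ) • u x))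

variable {μ lam : ℝ}

theorem measurable_scaledJap : Measurable (scaledJap (d := d) μ lam) := by
  have := measurable_jap (d := d)
  unfold scaledJap
  fun_prop

theorem scaledJap_pos (hlam : 0 < lam) (x : EuclideanSpace ℝ (Fin d)) : 0 < scaledJap μ lam x :=
  mul_pos (Real.sqrt_pos.2 (by linarith [Real.rpow_pos_of_pos (jap_pos x) (-μ)])) (jap_pos x)

theorem one_le_scaledJap (hlam : 0 ≤ lam) (hμ : μ ≤ 2) (x : EuclideanSpace ℝ (Fin d)) :
    1 ≤ scaledJap μ lam x :=
  one_le_sqrt_add_rpow_neg_mul hlam hμ (one_le_jap x)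

theorem sqrt_dyadicR_mul_norm_weightedFarPart_le (hlam : 0 < lam) (hμ : μ ≤ 2)
    (u : EuclideanSpace ℝ (Fin d) → ℂ) {k j : ℕ} {x : EuclideanSpace ℝ (Fin d)}
    (hk : x ∈ dyadicBlock (scaledJap μ lam) k) (hj : x ∈ dyadicBlock jap j) :
    √(dyadicR (k + 1)) * ‖weightedFarPart μ lam u x‖ ≤ √2 * √(dyadicR (j + 1)) * ‖u x‖ := by
  by_cases hx : x ∈ {x : EuclideanSpace ℝ (Fin d) | jap x ^ (-μ) ≤ lam}
  · have ht : 0 < lam + jap x ^ (-μ) := by linarith [Real.rpow_pos_of_pos (jap_pos x) (-μ)]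
    rw [weightedFarPart, Set.indicator_of_mem hx, norm_smul,
      Real.norm_of_nonneg (Real.rpow_nonneg ht.le _), ← mul_assoc]
    refine mul_le_mul_of_nonneg_right
      (sqrt_mul_rpow_neg_quarter_le (J := jap x) ht ?_ ?_) (norm_nonneg _)
    · have h := dyadicR_succ_le_two_mul_max hk.1
      rwa [abs_of_pos (scaledJap_pos hlam x), max_eq_left (one_le_scaledJap hlam.le hμ x)] at h
    · exact ((abs_of_pos (jap_pos x)).symm.trans_lt hj.2).le
  · rw [weightedFarPart, Set.indicator_of_notMem hx, norm_zero, mul_zero]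
    positivity

theorem lt_add_three_of_weightedFarPart_ne_zero (hlam : 0 < lam)
    (u : EuclideanSpace ℝ (Fin d) → ℂ) {j k l : ℕ} {x y : EuclideanSpace ℝ (Fin d)}
    (hx : x ∈ dyadicBlock (scaledJap μ lam) k ∩ dyadicBlock jap j)
    (hy : y ∈ dyadicBlock (scaledJap μ lam) l ∩ dyadicBlock jap j)
    (hux : weightedFarPart μ lam u x ≠ 0) : k < l + 3 := by
  have hxF : x ∈ {x : EuclideanSpace ℝ (Fin d) | jap x ^ (-μ) ≤ lam} :=
    by_contra fun h => hux (Set.indicator_of_notMem h _)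
  have hxy : jap x < 2 * jap y := by
    have h := dyadicR_succ_le_two_mul_max hy.2.1
    rw [abs_of_pos (jap_pos y), max_eq_left (one_le_jap y)] at h
    exact ((abs_of_pos (jap_pos x)).symm.trans_lt hx.2.2).trans_le h
  refine lt_add_three_of_dyadicR_le_of_lt_four_mul hx.1.1 hy.1.2 ?_
  rw [abs_of_pos (scaledJap_pos hlam x), abs_of_pos (scaledJap_pos hlam y)]
  exact sqrt_add_mul_lt_four_mul hlam hxF (Real.rpow_nonneg (jap_pos y).le _) (jap_pos x).le hxy

end JapaneseBracket

theorem stmt14_general (d : ℕ) (μ : ℝ) (hμ2 : μ < 2) :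
    ∀ lam : ℝ, 0 < lam → ∀ u : EuclideanSpace ℝ (Fin d) → ℂ,
      besovE volume (fun x => Real.sqrt (lam + jap x ^ (-μ)) * jap x)
          (Set.indicator {x | jap x ^ (-μ) ≤ lam}
            (fun x => (((lam + jap x ^ (-μ)) ^ (-(1 / 4 : ℝ)) : ℝ) • u x)))
        ≤ ENNReal.ofReal (8 * (Real.sqrt 2 + 1)) * besovE volume jap u := by
  intro lam hlam u
  calc besovE volume (scaledJap μ lam) (weightedFarPart μ lam u)
      ≤ ENNReal.ofReal ((3 : ℕ) * √2) * besovE volume jap u :=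
        besovE_le_of_dyadicBlock_overlap measurable_scaledJap measurable_jap _ _
          (fun _ _ _ hx => sqrt_dyadicR_mul_norm_weightedFarPart_le hlam hμ2.le u hx.1 hx.2)
          (fun _ _ _ _ hx _ hy hux _ => lt_add_three_of_weightedFarPart_ne_zero hlam u hx hy hux)
    _ ≤ ENNReal.ofReal (8 * (√2 + 1)) * besovE volume jap u := by
      gcongr ENNReal.ofReal ?_ * _
      push_cast
      nlinarith [Real.sqrt_nonneg 2]

/-- for `μ ∈ (0,2)`, `f_λ(x) = (λ + ⟨x⟩^{-μ})^{1/2}` and `F₊` the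
indicator of `{λ ≥ ⟨x⟩^{-μ}}`, one has, uniformly in `λ > 0`,
`‖f_λ^{-1/2} F₊ u‖_{B(f_λ⟨x⟩)} ≤ 8(√2 + 1) ‖u‖_{B(⟨x⟩)}` for all `u ∈ B(⟨x⟩)`. -/
theorem stmt14 (d : ℕ) (μ : ℝ) (hμ0 : 0 < μ) (hμ2 : μ < 2) :
    ∀ lam : ℝ, 0 < lam → ∀ u : EuclideanSpace ℝ (Fin d) → ℂ,
      besovE volume (fun x => Real.sqrt (lam + jap x ^ (-μ)) * jap x)
          (Set.indicator {x | jap x ^ (-μ) ≤ lam}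
            (fun x => (((lam + jap x ^ (-μ)) ^ (-(1 / 4 : ℝ)) : ℝ) • u x)))
        ≤ ENNReal.ofReal (8 * (Real.sqrt 2 + 1)) * besovE volume jap u :=
  stmt14_general d μ hμ2
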